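/- arXiv:2312.15337 — 3 statements merged into one kernel-verified Lean document; each statement's English description precedes it below -/
import Mathlib

section
/- Let W be a finite-dimensional inner product space, V ⊆ W a subspace, P the orthogonal projection onto V, B a linear operator on W with P∘B invertible on V, and f ∈ W. Let (s_i)_{i=1}^K be an orthonormal basis of V^⊥ with decompositions s_i = q_i + q̃_i where P(B q_i) = 0 and q̃_i ∈ V. If w ∈ W satisfies P(B w − f) = 0, then v := w − Σ_i ⟨w, s_i⟩ q_i satisfies v ∈ V and P(B v − f) = 0. -/
open scoped RealInnerProductSpace

/-- Theorem 1: if `w` solves `P (B w - f) = 0` in `W`, then subtracting the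
correction `∑ ⟪w, sᵢ⟫ qᵢ` produces a solution `v ∈ V` of `P (B v - f) = 0`. -/
theorem stmt1 {W : Type*} [NormedAddCommGroup W] [InnerProductSpace ℝ W]
    [FiniteDimensional ℝ W] (V : Submodule ℝ W) (B : W →ₗ[ℝ] W)
    (P : W →ₗ[ℝ] W) (hP : ∀ w, P w = (Submodule.orthogonalProjectionOnto V w : W))
    (hC : Function.Bijective (fun v : V => (Submodule.orthogonalProjectionOnto V (B v) : V)))
    (f : W) (K : ℕ) (s q qt : Fin K → W)
    (hon : Orthonormal ℝ s) (hsperp : ∀ i, s i ∈ Vᗮ)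
    (hspan : Submodule.span ℝ (Set.range s) = Vᗮ)
    (hdec : ∀ i, s i = q i + qt i) (hq : ∀ i, P (B (q i)) = 0)
    (hqt : ∀ i, qt i ∈ V)
    (w : W) (hw : P (B w - f) = 0) :
    w - ∑ i, ⟪w, s i⟫ • q i ∈ V ∧ P (B (w - ∑ i, ⟪w, s i⟫ • q i) - f) = 0 := by
  constructor
  · -- membership
    have h1 : w - ∑ i, ⟪w, s i⟫ • s i ∈ V := by
      rw [← Submodule.orthogonal_orthogonal V, ← hspan, Submodule.mem_orthogonal]
      intro u hu
      induction hu using Submodule.span_induction with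
      | mem x hx =>
        obtain ⟨j, rfl⟩ := hx
        have hso := orthonormal_iff_ite.mp hon
        simp [inner_sub_right, inner_sum, real_inner_smul_right, hso,
          real_inner_comm (s j) w]
      | zero => simp
      | add x y hx hy ihx ihy => rw [inner_add_left]; rw [ihx, ihy]; ring
      | smul a x hx ih => rw [inner_smul_left]; rw [ih]; ring
    have h2 : w - ∑ i, ⟪w, s i⟫ • q i
        = (w - ∑ i, ⟪w, s i⟫ • s i) + ∑ i, ⟪w, s i⟫ • qt i := by
      have hq' : ∀ i, q i = s i - qt i := fun i => by rw [hdec i]; abel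
      simp only [hq', smul_sub, Finset.sum_sub_distrib]
      abel
    rw [h2]
    exact V.add_mem h1 (Submodule.sum_mem V fun i _ => V.smul_mem _ (hqt i))
  · have h3 : B (w - ∑ i, ⟪w, s i⟫ • q i) - f
        = (B w - f) - ∑ i, ⟪w, s i⟫ • B (q i) := by
      rw [map_sub, map_sum]
      simp only [map_smul]
      abel
    rw [h3, map_sub, map_sum]
    simp only [map_smul, hq, smul_zero, Finset.sum_const_zero, hw, sub_zero]
end

section
/- Under the hypotheses of the previous theorem, the corrected element v = w − Σ_i ⟨w, s_i⟩ q_i is the unique element of V satisfying P(B v − f) = 0; in particular v does not depend on the choice of solution w ∈ W of P(B w − f) = 0. -/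
open scoped RealInnerProductSpace

/-- The corrected element `v = w - ∑ ⟪w, sᵢ⟫ qᵢ` is the unique element of `V`
satisfying `P (B v - f) = 0`; in particular it does not depend on the choice
of the solution `w ∈ W` of `P (B w - f) = 0`. -/
theorem stmt2 {W : Type*} [NormedAddCommGroup W] [InnerProductSpace ℝ W]
    [FiniteDimensional ℝ W] (V : Submodule ℝ W) (B : W →ₗ[ℝ] W)
    (P : W →ₗ[ℝ] W) (hP : ∀ w, P w = (Submodule.orthogonalProjectionOnto V w : W))
    (hC : Function.Bijective (fun v : V => (Submodule.orthogonalProjectionOnto V (B v) : V)))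
    (f : W) (K : ℕ) (s q qt : Fin K → W)
    (hon : Orthonormal ℝ s) (hsperp : ∀ i, s i ∈ Vᗮ)
    (hspan : Submodule.span ℝ (Set.range s) = Vᗮ)
    (hdec : ∀ i, s i = q i + qt i) (hq : ∀ i, P (B (q i)) = 0)
    (hqt : ∀ i, qt i ∈ V)
    (w : W) (hw : P (B w - f) = 0) :
    (w - ∑ i, ⟪w, s i⟫ • q i ∈ V ∧ P (B (w - ∑ i, ⟪w, s i⟫ • q i) - f) = 0) ∧
      (∀ v' ∈ V, P (B v' - f) = 0 → v' = w - ∑ i, ⟪w, s i⟫ • q i) := by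
  set c : Fin K → ℝ := fun i => ⟪w, s i⟫ with hc
  set v : W := w - ∑ i, c i • q i with hvdef
  -- membership in V
  have hqe : ∀ i, q i = s i - qt i := fun i => by rw [hdec i]; abel
  have hx : w - ∑ i, c i • s i ∈ Vᗮᗮ := by
    rw [Submodule.mem_orthogonal]
    intro u hu
    rw [← hspan] at hu
    induction hu using Submodule.span_induction with
    | mem x hx =>
      obtain ⟨j, rfl⟩ := hx
      rw [inner_sub_right, hon.inner_right_fintype c j, hc]
      simp [real_inner_comm]
    | zero => simp
    | add x y _ _ hx hy => rw [inner_add_left, hx, hy]; ring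
    | smul a x _ hx => rw [real_inner_smul_left, hx]; ring
  rw [Submodule.orthogonal_orthogonal] at hx
  have hvV : v ∈ V := by
    have : v = (w - ∑ i, c i • s i) + ∑ i, c i • qt i := by
      rw [hvdef]
      simp only [hqe, smul_sub, Finset.sum_sub_distrib]
      abel
    rw [this]
    exact Submodule.add_mem V hx (Submodule.sum_mem V fun i _ =>
      Submodule.smul_mem V _ (hqt i))
  have hv0 : P (B v - f) = 0 := by
    simp only [hvdef, map_sub, map_sum, map_smul] at hw ⊢
    simp only [hq, smul_zero, Finset.sum_const_zero, sub_zero]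
    simpa using hw
  refine ⟨⟨hvV, hv0⟩, fun v' hv' hPv' => ?_⟩
  have hPB : (Submodule.orthogonalProjectionOnto V (B v') : V) = Submodule.orthogonalProjectionOnto V (B v) := by
    have h1 : P (B v') = P (B v) := by
      rw [map_sub] at hPv' hv0
      have := sub_eq_zero.mp hPv'
      rw [this, sub_eq_zero.mp hv0]
    rw [hP, hP] at h1
    exact Subtype.coe_injective h1
  have := hC.injective (a₁ := ⟨v', hv'⟩) (a₂ := ⟨v, hvV⟩) hPB
  exact Subtype.ext_iff.mp this
end

section
/- Let W = span{T_0,…,T_{N+1}} with the Chebyshev weighted inner product and V = {p ∈ W : p(1) = 0, ∂p(−1) = 0} (value zero at 1, derivative zero at −1). Then the orthogonal complement of V in W is spanned by the two vectors whose Chebyshev coefficient sequences are s̃_1 = (1, 2, 2, …, 2) and s̃_2 = (0, −1, 4, −9, …, (−1)^{N+1}(N+1)²) (i.e., s̃_2 has k-th coefficient (−1)^k k²), up to the normalization convention (T_0,T_0) = π/2, (T_k,T_k) = π for k ≥ 1. -/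
open Polynomial intervalIntegral MeasureTheory Real

namespace Stmt14Aux

lemma wMeas : AEStronglyMeasurable (fun x : ℝ => 1 / Real.sqrt (1 - x^2)) volume :=
  (measurable_const.div ((Real.continuous_sqrt.comp (by continuity)).measurable)).aestronglyMeasurable

lemma wbound {x : ℝ} (h0 : 0 ≤ x) (h1 : x ≤ 1) :
    ‖1 / Real.sqrt (1 - x^2)‖ ≤ (1 - x) ^ (-(1/2) : ℝ) := by
  rcases eq_or_lt_of_le h1 with rfl | hlt
  · simp [Real.zero_rpow (by norm_num : (-(1/2) : ℝ) ≠ 0)]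
  · have hx : (0:ℝ) < 1 - x := by linarith
    have hle : 1 - x ≤ 1 - x^2 := by nlinarith
    rw [Real.rpow_neg hx.le, one_div, ← Real.sqrt_eq_rpow]
    rw [norm_inv, Real.norm_eq_abs, abs_of_nonneg (Real.sqrt_nonneg _)]
    exact inv_anti₀ (Real.sqrt_pos.mpr hx) (Real.sqrt_le_sqrt hle)

lemma wInt01 : IntervalIntegrable (fun x : ℝ => 1 / Real.sqrt (1 - x^2)) volume 0 1 := by
  have hg : IntervalIntegrable (fun x : ℝ => (1 - x) ^ (-(1/2) : ℝ)) volume 0 1 := by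
    have := (intervalIntegrable_rpow' (a := 1) (b := 0) (r := (-(1/2) : ℝ)) (by norm_num)).comp_sub_left 1
    simpa using this
  refine hg.mono_fun' wMeas.restrict ?_
  refine (ae_restrict_iff' measurableSet_uIoc).mpr (Filter.Eventually.of_forall fun x hx => ?_)
  rw [Set.uIoc_of_le (by norm_num : (0:ℝ) ≤ 1)] at hx
  exact wbound hx.1.le hx.2

lemma wInt : IntervalIntegrable (fun x : ℝ => 1 / Real.sqrt (1 - x^2)) volume (-1) 1 := by
  have hneg : IntervalIntegrable (fun x : ℝ => 1 / Real.sqrt (1 - x^2)) volume (-1) 0 := by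
    have := wInt01.comp_sub_left 0
    simpa [neg_sq] using this.symm
  exact hneg.trans wInt01

lemma polyInt (P : Polynomial ℝ) :
    IntervalIntegrable (fun x : ℝ => P.eval x / Real.sqrt (1 - x^2)) volume (-1) 1 := by
  obtain ⟨C, hC⟩ : ∃ C, ∀ x ∈ Set.Icc (-1:ℝ) 1, |P.eval x| ≤ C :=
    IsCompact.exists_bound_of_continuousOn isCompact_Icc (P.continuous_aeval.continuousOn)
  have hg : IntervalIntegrable (fun x : ℝ => C * (1 / Real.sqrt (1 - x^2))) volume (-1) 1 :=
    wInt.const_mul C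
  refine hg.mono_fun' ?_ ?_
  · exact ((P.continuous.measurable.div
      (Real.continuous_sqrt.comp (by continuity)).measurable)).aestronglyMeasurable.restrict
  · refine (ae_restrict_iff' measurableSet_uIoc).mpr (Filter.Eventually.of_forall fun x hx => ?_)
    rw [Set.uIoc_of_le (by norm_num : (-1:ℝ) ≤ 1)] at hx
    have h1 : |P.eval x| ≤ C := hC x ⟨hx.1.le, hx.2⟩
    have h2 : (0:ℝ) ≤ 1 / Real.sqrt (1 - x^2) := by positivity
    calc ‖P.eval x / Real.sqrt (1 - x^2)‖ = |P.eval x| * (1 / Real.sqrt (1 - x^2)) := by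
          rw [Real.norm_eq_abs, abs_div, div_eq_mul_one_div]
          rw [abs_of_nonneg (Real.sqrt_nonneg _)]
      _ ≤ C * (1 / Real.sqrt (1 - x^2)) := by
          exact mul_le_mul_of_nonneg_right h1 h2

lemma intT (n : ℤ) :
    ∫ x in (-1:ℝ)..1, (Chebyshev.T ℝ n).eval x / Real.sqrt (1 - x^2)
      = if n = 0 then π else 0 := by
  rcases eq_or_ne n 0 with rfl | hn
  · simp only [Chebyshev.T_zero, Polynomial.eval_one, if_true]
    have h := integral_eq_sub_of_hasDeriv_right_of_le (f := Real.arcsin)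
      (f' := fun x : ℝ => 1 / Real.sqrt (1 - x^2)) (by norm_num : (-1:ℝ) ≤ 1)
      (Real.continuous_arcsin.continuousOn)
      (fun x hx => ((Real.hasDerivAt_arcsin (ne_of_gt hx.1) (ne_of_lt hx.2)).hasDerivWithinAt))
      (by simpa using polyInt 1)
    simp only [Real.arcsin_one, Real.arcsin_neg_one] at h
    rw [h]; ring
  · rw [if_neg hn]
    set f : ℝ → ℝ := fun x => -(1/(n:ℝ)) * Real.sin ((n:ℝ) * Real.arccos x) with hf
    have hder : ∀ x ∈ Set.Ioo (-1:ℝ) 1,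
        HasDerivAt f ((Chebyshev.T ℝ n).eval x / Real.sqrt (1 - x^2)) x := by
      intro x hx
      have h1 : HasDerivAt Real.arccos (-(1/Real.sqrt (1 - x^2))) x :=
        Real.hasDerivAt_arccos (ne_of_gt hx.1) (ne_of_lt hx.2)
      have h2 := ((Real.hasDerivAt_sin ((n:ℝ) * Real.arccos x)).comp x
        (h1.const_mul (n:ℝ))).const_mul (-(1/(n:ℝ)))
      have hs : (0:ℝ) < Real.sqrt (1 - x^2) := by
        apply Real.sqrt_pos.mpr; nlinarith [hx.1, hx.2]
      have hcos : Real.cos ((n:ℝ) * Real.arccos x) = (Chebyshev.T ℝ n).eval x := by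
        rw [← Chebyshev.T_real_cos (Real.arccos x) n, Real.cos_arccos hx.1.le hx.2.le]
      refine h2.congr_deriv (Eq.symm ?_)
      rw [← hcos]
      have hn' : (n:ℝ) ≠ 0 := Int.cast_ne_zero.mpr hn
      field_simp
    have hc : ContinuousOn f (Set.Icc (-1:ℝ) 1) :=
      (continuous_const.mul (Real.continuous_sin.comp
        (continuous_const.mul Real.continuous_arccos))).continuousOn
    have h := integral_eq_sub_of_hasDeriv_right_of_le (by norm_num : (-1:ℝ) ≤ 1) hc
      (fun x hx => (hder x hx).hasDerivWithinAt) (polyInt _)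
    rw [h, hf]
    simp only [Real.arccos_one, Real.arccos_neg_one, mul_zero, Real.sin_zero, mul_zero]
    rw [Real.sin_int_mul_pi]
    ring

noncomputable def chB (p q : Polynomial ℝ) : ℝ :=
  ∫ x in (-1:ℝ)..1, p.eval x * q.eval x / Real.sqrt (1 - x^2)

lemma chB_comm (p q : Polynomial ℝ) : chB p q = chB q p := by
  unfold chB; congr 1; funext x; ring_nf

lemma chB_int (p q : Polynomial ℝ) :
    IntervalIntegrable (fun x : ℝ => p.eval x * q.eval x / Real.sqrt (1 - x^2))
      volume (-1) 1 := by
  have := polyInt (p*q)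
  simpa only [Polynomial.eval_mul] using this

lemma chB_add_left (p₁ p₂ q : Polynomial ℝ) :
    chB (p₁ + p₂) q = chB p₁ q + chB p₂ q := by
  unfold chB
  rw [← integral_add (chB_int p₁ q) (chB_int p₂ q)]
  congr 1; funext x; rw [Polynomial.eval_add]; ring

lemma chB_sub_left (p₁ p₂ q : Polynomial ℝ) :
    chB (p₁ - p₂) q = chB p₁ q - chB p₂ q := by
  unfold chB
  rw [← integral_sub (chB_int p₁ q) (chB_int p₂ q)]
  congr 1; funext x; rw [Polynomial.eval_sub]; ring

lemma chB_smul_left (c : ℝ) (p q : Polynomial ℝ) :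
    chB (c • p) q = c * chB p q := by
  unfold chB
  rw [← intervalIntegral.integral_const_mul]
  congr 1; funext x; rw [Polynomial.eval_smul, smul_eq_mul]; ring

lemma chB_sum_left {ι : Type*} (s : Finset ι) (f : ι → Polynomial ℝ) (q : Polynomial ℝ) :
    chB (∑ i ∈ s, f i) q = ∑ i ∈ s, chB (f i) q := by
  induction s using Finset.cons_induction with
  | empty => simp [chB]
  | cons a s ha ih => rw [Finset.sum_cons, Finset.sum_cons, chB_add_left, ih]

lemma chB_TT (j k : ℕ) :
    chB (Chebyshev.T ℝ j) (Chebyshev.T ℝ k)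
      = if j = k then (if j = 0 then π else π/2) else 0 := by
  have hpt : ∀ x : ℝ, (Chebyshev.T ℝ j).eval x * (Chebyshev.T ℝ k).eval x / Real.sqrt (1-x^2)
      = (1/2) * ((Chebyshev.T ℝ ((j:ℤ)+k)).eval x / Real.sqrt (1-x^2)
        + (Chebyshev.T ℝ ((j:ℤ)-k)).eval x / Real.sqrt (1-x^2)) := by
    intro x
    have h := congrArg (Polynomial.eval x) (Chebyshev.T_mul_T (R := ℝ) (j:ℤ) (k:ℤ))
    simp only [Polynomial.eval_mul, Polynomial.eval_add, Polynomial.eval_ofNat] at h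
    rcases eq_or_ne (Real.sqrt (1-x^2)) 0 with hs | hs
    · simp [hs]
    · field_simp
      linear_combination h
  have : chB (Chebyshev.T ℝ j) (Chebyshev.T ℝ k)
      = (1/2) * ((∫ x in (-1:ℝ)..1, (Chebyshev.T ℝ ((j:ℤ)+k)).eval x / Real.sqrt (1-x^2))
        + ∫ x in (-1:ℝ)..1, (Chebyshev.T ℝ ((j:ℤ)-k)).eval x / Real.sqrt (1-x^2)) := by
    unfold chB
    rw [← integral_add (polyInt _) (polyInt _), ← intervalIntegral.integral_const_mul]
    congr 1; funext x; exact hpt x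
  rw [this, intT, intT]
  by_cases hjk : j = k
  · subst hjk
    by_cases hj : j = 0
    · subst hj; norm_num
      ring
    · have h1 : ¬ ((j:ℤ) + j = 0) := by omega
      have h2 : (j:ℤ) - j = 0 := by omega
      rw [if_neg h1, if_pos h2, if_pos rfl, if_neg hj]
      ring
  · have h1 : ¬ ((j:ℤ) + k = 0) := by omega
    have h2 : ¬ ((j:ℤ) - k = 0) := by omega
    rw [if_neg h1, if_neg h2, if_neg hjk]
    ring

lemma Teval1 (n : ℤ) : (Chebyshev.T ℝ n).eval 1 = 1 := by
  have := Chebyshev.T_real_cos 0 n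
  simpa using this

lemma Ueval : ∀ m : ℕ, (Chebyshev.U ℝ (m:ℤ)).eval (-1) = (-1:ℝ)^m * (m+1)
  | 0 => by simp [Chebyshev.U_zero]
  | 1 => by simp [Chebyshev.U_one]; norm_num
  | (m+2) => by
    have h1 := Ueval m
    have h2 := Ueval (m+1)
    have hc : ((m+2:ℕ):ℤ) = (m:ℤ) + 2 := by push_cast; ring
    rw [hc, Chebyshev.U_add_two]
    have hc1 : ((m+1:ℕ):ℤ) = (m:ℤ) + 1 := by push_cast; ring
    rw [hc1] at h2
    simp only [Polynomial.eval_sub, Polynomial.eval_mul, Polynomial.eval_ofNat,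
      Polynomial.eval_X, h1, h2]
    push_cast
    ring

lemma dTeval (k : ℕ) :
    ((Polynomial.derivative (Chebyshev.T ℝ (k:ℤ))).eval (-1)) = (-1:ℝ)^(k+1) * k^2 := by
  rw [Chebyshev.T_derivative_eq_U]
  cases k with
  | zero => simp
  | succ m =>
    have hc : ((m+1:ℕ):ℤ) - 1 = (m:ℤ) := by push_cast; ring
    rw [hc]
    simp only [Polynomial.eval_mul, Polynomial.eval_intCast, Ueval m]
    push_cast
    ring

lemma chB_s1 (N k : ℕ) (hk : k ≤ N+1) :
    chB (Chebyshev.T ℝ 0 + ∑ j ∈ Finset.Icc 1 (N+1), C (2:ℝ) * Chebyshev.T ℝ j)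
      (Chebyshev.T ℝ k) = π := by
  have hC : ∀ j : ℕ, C (2:ℝ) * Chebyshev.T ℝ j = (2:ℝ) • Chebyshev.T ℝ j := by
    intro j; rw [Polynomial.smul_eq_C_mul]
  simp only [hC]
  rw [chB_add_left, chB_sum_left]
  have h0 : chB (Chebyshev.T ℝ (0:ℕ)) (Chebyshev.T ℝ k) = if 0 = k then π else 0 := by
    rw [chB_TT]; by_cases h : (0:ℕ) = k <;> simp [h]
  by_cases hk0 : k = 0
  · subst hk0
    rw [show ((0:ℤ)) = ((0:ℕ):ℤ) by norm_num] at *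
    rw [h0, if_pos rfl]
    have : ∀ j ∈ Finset.Icc 1 (N+1), chB ((2:ℝ) • Chebyshev.T ℝ j) (Chebyshev.T ℝ (0:ℕ)) = 0 := by
      intro j hj
      rw [chB_smul_left, chB_TT, if_neg (by simp at hj; omega)]
      ring
    rw [Finset.sum_congr rfl this]
    simp
  · rw [show ((0:ℤ)) = ((0:ℕ):ℤ) by norm_num, h0, if_neg (fun h => hk0 h.symm)]
    rw [Finset.sum_eq_single_of_mem k (Finset.mem_Icc.mpr ⟨Nat.one_le_iff_ne_zero.mpr hk0, hk⟩)]
    · rw [chB_smul_left, chB_TT, if_pos rfl, if_neg hk0]; ring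
    · intro j hj hjk
      rw [chB_smul_left, chB_TT, if_neg (by exact_mod_cast fun h => hjk (by exact_mod_cast h))]
      ring

lemma chB_s2 (N k : ℕ) (hk : k ≤ N+1) :
    chB (∑ j ∈ Finset.range (N+2), C ((-1:ℝ)^j * (j:ℝ)^2) * Chebyshev.T ℝ j)
      (Chebyshev.T ℝ k) = (-1:ℝ)^k * (k:ℝ)^2 * (π/2) := by
  have hC : ∀ j : ℕ, C ((-1:ℝ)^j * (j:ℝ)^2) * Chebyshev.T ℝ j
      = ((-1:ℝ)^j * (j:ℝ)^2) • Chebyshev.T ℝ j := by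
    intro j; rw [Polynomial.smul_eq_C_mul]
  simp only [hC]
  rw [chB_sum_left]
  rw [Finset.sum_eq_single_of_mem k (Finset.mem_range.mpr (by omega))]
  · rw [chB_smul_left, chB_TT, if_pos rfl]
    by_cases hk0 : k = 0
    · subst hk0; simp
    · rw [if_neg hk0]
  · intro j hj hjk
    rw [chB_smul_left, chB_TT, if_neg hjk]
    ring

end Stmt14Aux
open Stmt14Aux in
/-- For `W = span{T_0,…,T_{N+1}}` and
`V = {p ∈ W : p(1) = 0, p'(−1) = 0}`, the orthogonal complement of `V` in `W`
for the Chebyshev weight is spanned by the vectors with Chebyshev coefficients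
`s̃₁ = (1,2,2,…,2)` and `s̃₂ = (0,−1,4,−9,…,(−1)^{N+1}(N+1)²)`. -/
theorem stmt14 (N : ℕ)
    (Wsp Vsp : Submodule ℝ (Polynomial ℝ))
    (hW : Wsp = Submodule.span ℝ ((fun k : ℕ => Chebyshev.T ℝ k) '' Set.Iic (N + 1)))
    (hV : ∀ p, p ∈ Vsp ↔
      p ∈ Wsp ∧ p.eval 1 = 0 ∧ (derivative p).eval (-1) = 0)
    (s₁ s₂ : Polynomial ℝ)
    (hs₁ : s₁ = Chebyshev.T ℝ 0 +
      ∑ k ∈ Finset.Icc 1 (N + 1), C (2 : ℝ) * Chebyshev.T ℝ k)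
    (hs₂ : s₂ = ∑ k ∈ Finset.range (N + 2),
      C ((-1 : ℝ) ^ k * (k : ℝ) ^ 2) * Chebyshev.T ℝ k) :
    ∀ p ∈ Wsp,
      ((∀ q ∈ Vsp,
          ∫ x in (-1:ℝ)..1, p.eval x * q.eval x / Real.sqrt (1 - x ^ 2) = 0) ↔
        p ∈ Submodule.span ℝ {s₁, s₂}) := by
  -- basis representation of elements of W
  have hrep : ∀ q ∈ Wsp, ∃ b : ℕ → ℝ,
      q = ∑ k ∈ Finset.Iic (N+1), b k • Chebyshev.T ℝ k := by
    intro q hq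
    rw [hW] at hq
    obtain ⟨l, hl, rfl⟩ := (Finsupp.mem_span_image_iff_linearCombination ℝ).mp hq
    refine ⟨l, ?_⟩
    rw [Finsupp.linearCombination_apply, Finsupp.sum]
    refine Finset.sum_subset ?_ ?_
    · intro k hk
      have hmem : k ∈ Set.Iic (N+1) := (Finsupp.mem_supported ℝ l).mp hl hk
      exact Finset.mem_Iic.mpr hmem
    · intro k _ hk
      rw [Finsupp.notMem_support_iff.mp hk, zero_smul]
  -- membership of basic vectors
  have hTmem : ∀ k : ℕ, k ≤ N+1 → Chebyshev.T ℝ k ∈ Wsp := by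
    intro k hk
    rw [hW]
    exact Submodule.subset_span ⟨k, hk, rfl⟩
  have hu1 : (1 : Polynomial ℝ) ∈ Wsp := by
    have := hTmem 0 (by omega)
    simpa [Chebyshev.T_zero] using this
  have hu2 : (X - 1 : Polynomial ℝ) ∈ Wsp := by
    have h1 := hTmem 1 (by omega)
    have h0 := hTmem 0 (by omega)
    rw [show ((1:ℕ):ℤ) = 1 by norm_num] at h1
    rw [show ((0:ℕ):ℤ) = 0 by norm_num] at h0
    rw [Chebyshev.T_one] at h1
    rw [Chebyshev.T_zero] at h0
    exact sub_mem h1 h0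
  have hs₁W : s₁ ∈ Wsp := by
    rw [hs₁]
    refine add_mem ?_ (Submodule.sum_mem _ fun j hj => ?_)
    · have := hTmem 0 (by omega)
      simpa using this
    · rw [← Polynomial.smul_eq_C_mul]
      exact Submodule.smul_mem _ _ (hTmem j (Finset.mem_Icc.mp hj).2)
  have hs₂W : s₂ ∈ Wsp := by
    rw [hs₂]
    refine Submodule.sum_mem _ fun j hj => ?_
    rw [← Polynomial.smul_eq_C_mul]
    exact Submodule.smul_mem _ _ (hTmem j (by
      have := Finset.mem_range.mp hj; omega))
  -- key identities for s₁ and s₂ against any element of W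
  have e1 : ∀ q ∈ Wsp, chB s₁ q = π * q.eval 1 := by
    intro q hq
    obtain ⟨b, rfl⟩ := hrep q hq
    rw [chB_comm, chB_sum_left]
    have hterm : ∀ k ∈ Finset.Iic (N+1),
        chB (b k • Chebyshev.T ℝ k) s₁ = b k * π := by
      intro k hk
      rw [chB_smul_left, chB_comm, hs₁, chB_s1 N k (Finset.mem_Iic.mp hk)]
    rw [Finset.sum_congr rfl hterm]
    have heval : (∑ k ∈ Finset.Iic (N+1), b k • Chebyshev.T ℝ k).eval 1
        = ∑ k ∈ Finset.Iic (N+1), b k := by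
      rw [Polynomial.eval_finset_sum]
      refine Finset.sum_congr rfl fun k _ => ?_
      rw [Polynomial.eval_smul, Teval1, smul_eq_mul, mul_one]
    rw [heval, Finset.mul_sum]
    exact Finset.sum_congr rfl fun k _ => by ring
  have e2 : ∀ q ∈ Wsp, chB s₂ q = -(π/2) * (derivative q).eval (-1) := by
    intro q hq
    obtain ⟨b, rfl⟩ := hrep q hq
    rw [chB_comm, chB_sum_left]
    have hterm : ∀ k ∈ Finset.Iic (N+1),
        chB (b k • Chebyshev.T ℝ k) s₂ = b k * ((-1:ℝ)^k * (k:ℝ)^2 * (π/2)) := by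
      intro k hk
      rw [chB_smul_left, chB_comm, hs₂, chB_s2 N k (Finset.mem_Iic.mp hk)]
    rw [Finset.sum_congr rfl hterm]
    have heval : (derivative (∑ k ∈ Finset.Iic (N+1), b k • Chebyshev.T ℝ k)).eval (-1)
        = ∑ k ∈ Finset.Iic (N+1), b k * ((-1:ℝ)^(k+1) * (k:ℝ)^2) := by
      rw [map_sum, Polynomial.eval_finset_sum]
      refine Finset.sum_congr rfl fun k _ => ?_
      rw [Polynomial.derivative_smul, Polynomial.eval_smul, dTeval, smul_eq_mul]
    rw [heval, Finset.mul_sum]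
    refine Finset.sum_congr rfl fun k _ => ?_
    rw [pow_succ]
    ring
  -- positive definiteness on W
  have posdef : ∀ q ∈ Wsp, chB q q = 0 → q = 0 := by
    intro q hq hzero
    obtain ⟨b, rfl⟩ := hrep q hq
    have hdiag : chB (∑ k ∈ Finset.Iic (N+1), b k • Chebyshev.T ℝ k)
        (∑ k ∈ Finset.Iic (N+1), b k • Chebyshev.T ℝ k)
        = ∑ k ∈ Finset.Iic (N+1), (b k)^2 * (if k = 0 then π else π/2) := by
      rw [chB_sum_left]
      refine Finset.sum_congr rfl fun j hj => ?_
      rw [chB_smul_left, chB_comm, chB_sum_left]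
      rw [Finset.sum_eq_single_of_mem j hj]
      · rw [chB_smul_left, chB_TT, if_pos rfl]; ring
      · intro k _ hkj
        rw [chB_smul_left, chB_TT, if_neg hkj]; ring
    rw [hdiag] at hzero
    have hball : ∀ k ∈ Finset.Iic (N+1), b k = 0 := by
      intro k hk
      have hwpos : ∀ j : ℕ, (0:ℝ) < if j = 0 then π else π/2 := by
        intro j
        by_cases h : j = 0
        · rw [if_pos h]; exact Real.pi_pos
        · rw [if_neg h]; exact half_pos Real.pi_pos
      have hnn : ∀ j ∈ Finset.Iic (N+1), 0 ≤ (b j)^2 * (if j = 0 then π else π/2) := by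
        intro j _
        exact mul_nonneg (sq_nonneg _) (hwpos j).le
      have hterm := (Finset.sum_eq_zero_iff_of_nonneg hnn).mp hzero k hk
      have hb2 : (b k)^2 = 0 := by
        rcases mul_eq_zero.mp hterm with h | h
        · exact h
        · exact absurd h (ne_of_gt (hwpos k))
      exact pow_eq_zero_iff (n := 2) (by norm_num) |>.mp hb2
    exact Finset.sum_eq_zero fun k hk => by rw [hball k hk, zero_smul]
  -- main proof
  intro p hp
  constructor
  · intro horth
    set α := chB p 1 with hα
    set β := chB p (X - 1) with hβ
    have hkey : ∀ q ∈ Wsp, chB p q = q.eval 1 * α + (derivative q).eval (-1) * β := by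
      intro q hq
      set a := q.eval 1
      set c := (derivative q).eval (-1)
      have hmem : q - a • (1:Polynomial ℝ) - c • (X - 1) ∈ Vsp := by
        rw [hV]
        refine ⟨sub_mem (sub_mem hq (Submodule.smul_mem _ _ hu1)) (Submodule.smul_mem _ _ hu2),
          ?_, ?_⟩
        · simp [Polynomial.eval_smul, smul_eq_mul, a]
        · simp [Polynomial.derivative_smul, Polynomial.eval_smul, smul_eq_mul, c]
      have h0 : chB p (q - a • (1:Polynomial ℝ) - c • (X - 1)) = 0 := horth _ hmem
      rw [chB_comm, chB_sub_left, chB_sub_left, chB_smul_left, chB_smul_left,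
        chB_comm q p, chB_comm (1:Polynomial ℝ) p, chB_comm (X-1) p] at h0
      rw [← hα, ← hβ] at h0
      linarith
    set c₁ := α / π with hc₁
    set c₂ := -2 * β / π with hc₂
    have hrW : p - c₁ • s₁ - c₂ • s₂ ∈ Wsp :=
      sub_mem (sub_mem hp (Submodule.smul_mem _ _ hs₁W)) (Submodule.smul_mem _ _ hs₂W)
    have hrzero : ∀ q ∈ Wsp, chB (p - c₁ • s₁ - c₂ • s₂) q = 0 := by
      intro q hq
      rw [chB_sub_left, chB_sub_left, chB_smul_left, chB_smul_left,
        hkey q hq, e1 q hq, e2 q hq, hc₁, hc₂]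
      have hπ : (π:ℝ) ≠ 0 := Real.pi_ne_zero
      field_simp
      ring
    have hr0 : p - c₁ • s₁ - c₂ • s₂ = 0 :=
      posdef _ hrW (hrzero _ hrW)
    have hpeq : p = c₁ • s₁ + c₂ • s₂ := by
      rw [sub_sub] at hr0
      exact sub_eq_zero.mp hr0
    rw [hpeq]
    exact Submodule.add_mem _ (Submodule.smul_mem _ _ (Submodule.subset_span (by simp)))
      (Submodule.smul_mem _ _ (Submodule.subset_span (by simp)))
  · intro hmem q hq
    obtain ⟨c, d, rfl⟩ := Submodule.mem_span_pair.mp hmem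
    obtain ⟨hqW, hq1, hq2⟩ := (hV q).mp hq
    show chB (c • s₁ + d • s₂) q = 0
    rw [chB_add_left, chB_smul_left, chB_smul_left, e1 q hqW, e2 q hqW, hq1, hq2]
    ring
end
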